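/- arXiv:1902.08910 — 3 statements merged into one kernel-verified Lean document; each statement's English description precedes it below -/
import Mathlib

section
/- Define f(x) = x / (exp(-x) - 1) for x ≠ 0. If u and v are distinct nonzero reals with u * exp(u) = v * exp(v), then f(u - v) = v. -/
open Real

lemma Real.exp_sub_eq_div_of_mul_exp_eq {u v : ℝ} (hv : v ≠ 0)
    (h : u * exp u = v * exp v) : exp (v - u) = u / v := by
  rw [exp_sub, div_eq_div_iff (exp_ne_zero u) hv]
  linarith

theorem jeffrey_jankowski_general (u v : ℝ) (huv : u ≠ v) (hv : v ≠ 0)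
    (h : u * Real.exp u = v * Real.exp v) :
    (u - v) / (Real.exp (-(u - v)) - 1) = v := by
  rw [neg_sub, exp_sub_eq_div_of_mul_exp_eq hv h, div_sub_one hv]
  exact div_div_cancel₀ (sub_ne_zero.mpr huv)

theorem jeffrey_jankowski (u v : ℝ) (huv : u ≠ v) (hu : u ≠ 0) (hv : v ≠ 0)
    (h : u * Real.exp u = v * Real.exp v) :
    (u - v) / (Real.exp (-(u - v)) - 1) = v :=
  jeffrey_jankowski_general u v huv hv h
end

section
/- Let u, v be reals with u * exp(u) = v * exp(v) = t, where t < 0 and u ≠ v. Then ((u - v) * exp((u-v)/2)) / (exp((u-v)/2) - exp(-(u-v)/2)) = -v, provided the denominator is nonzero. -/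
theorem coth_branch_difference (u v t : ℝ) (hut : u * Real.exp u = t)
    (hvt : v * Real.exp v = t) (ht : t < 0) (huv : u ≠ v)
    (hden : Real.exp ((u - v) / 2) - Real.exp (-((u - v) / 2)) ≠ 0) :
    ((u - v) * Real.exp ((u - v) / 2)) /
      (Real.exp ((u - v) / 2) - Real.exp (-((u - v) / 2))) = -v := by
  set E := Real.exp ((u - v) / 2) with hE
  have hEpos : 0 < E := Real.exp_pos _
  have hneg : Real.exp (-((u - v) / 2)) = 1 / E := by
    rw [Real.exp_neg, hE, one_div]
  have hsq : E * E = Real.exp (u - v) := by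
    rw [hE, ← Real.exp_add]; ring_nf
  have huv2 : u * (E * E) = v := by
    rw [hsq, Real.exp_sub]
    have hv : Real.exp v ≠ 0 := Real.exp_ne_zero v
    field_simp
    linarith [hut, hvt]
  rw [hneg] at hden ⊢
  have hE0 : E ≠ 0 := ne_of_gt hEpos
  rw [div_eq_iff hden]
  have h2 : E - 1 / E ≠ 0 := hden
  have h3 : E * E - 1 ≠ 0 := by
    intro h
    apply h2
    field_simp
    nlinarith
  -- (u - v) * E = -v * (E - 1/E)
  field_simp
  nlinarith [huv2]
end

section
/- Let a, b ≠ 0 and x > 0, with u * exp(u) = a*x and w * exp(w) = (b*x)^2, u > 0, w > 0. If y = 2*u - w, then exp(y) = (a^2 / b^2) * (w / u^2) and (b^2/a^2) * y * exp(y) = (2*u - w) * w / u^2, hence 1 - (b^2/a^2)*y*exp(y) = ((u - w)/u)^2. -/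
open Real

/- Squaring `u e^u = a x` and dividing by `w e^w = (b x)^2` eliminates `x`:
`e^(2u - w) = a² w / (b² u²)`; the rest is algebra. -/

theorem exp_two_mul_sub_eq_of_mul_exp_eq {u w p q : ℝ} (hu : u ≠ 0) (hw : w ≠ 0)
    (hp : u * exp u = p) (hq : w * exp w = q) :
    exp (2 * u - w) = p ^ 2 / q * (w / u ^ 2) := by
  rw [← hp, ← hq, exp_sub, two_mul, exp_add]
  field_simp

theorem one_sub_two_mul_sub_mul_div_sq {u w : ℝ} (hu : u ≠ 0) :
    1 - (2 * u - w) * w / u ^ 2 = ((u - w) / u) ^ 2 := by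
  field_simp
  ring

theorem two_w_minus_w_sq (a b x u w y : ℝ) (ha : a ≠ 0) (hb : b ≠ 0) (hx : x > 0)
    (hu : u > 0) (hw : w > 0)
    (hux : u * Real.exp u = a * x) (hwx : w * Real.exp w = (b * x) ^ 2)
    (hy : y = 2 * u - w) :
    Real.exp y = (a ^ 2 / b ^ 2) * (w / u ^ 2) ∧
    (b ^ 2 / a ^ 2) * y * Real.exp y = (2 * u - w) * w / u ^ 2 ∧
    1 - (b ^ 2 / a ^ 2) * y * Real.exp y = ((u - w) / u) ^ 2 := by
  have hexp : exp y = (a ^ 2 / b ^ 2) * (w / u ^ 2) := by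
    rw [hy, exp_two_mul_sub_eq_of_mul_exp_eq hu.ne' hw.ne' hux hwx, mul_pow, mul_pow]
    field_simp [hx.ne']
  have hscaled : (b ^ 2 / a ^ 2) * y * exp y = (2 * u - w) * w / u ^ 2 := by
    rw [hexp, hy]
    field_simp
  exact ⟨hexp, hscaled, by rw [hscaled, one_sub_two_mul_sub_mul_div_sq hu.ne']⟩
end
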